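/- Let f : O → O be a real-linear map on the octonions satisfying f(px) = p̄ f(x) for all p, x ∈ O. Then f = 0. -/

import Mathlib

noncomputable section

open scoped Quaternion

/-- The octonions, built from pairs of quaternions via the Cayley–Dickson construction. -/
def Octonion : Type := ℍ[ℝ] × ℍ[ℝ]

namespace Octonion

def mk' (a b : ℍ[ℝ]) : Octonion := Prod.mk a b
def q1 (x : Octonion) : ℍ[ℝ] := Prod.fst x
def q2 (x : Octonion) : ℍ[ℝ] := Prod.snd x

instance : AddCommGroup Octonion := inferInstanceAs (AddCommGroup (ℍ[ℝ] × ℍ[ℝ]))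
instance : Module ℝ Octonion := inferInstanceAs (Module ℝ (ℍ[ℝ] × ℍ[ℝ]))
instance : One Octonion := ⟨mk' 1 0⟩
instance : Mul Octonion :=
  ⟨fun x y => mk' (q1 x * q1 y - star (q2 y) * q2 x) (q2 y * q1 x + q2 x * star (q1 y))⟩

/-- Octonion conjugation. -/
def conj (x : Octonion) : Octonion := mk' (star (q1 x)) (-(q2 x))

/-- The real part of an octonion. -/
def re (x : Octonion) : ℝ := (q1 x).re

/-- The standard basis `e 0 = 1, e 1, …, e 7` of the octonions. -/
def e : Fin 8 → Octonion :=
  ![mk' 1 0, mk' ⟨0,1,0,0⟩ 0, mk' ⟨0,0,1,0⟩ 0, mk' ⟨0,0,0,1⟩ 0,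
    mk' 0 1, mk' 0 ⟨0,1,0,0⟩, mk' 0 ⟨0,0,1,0⟩, mk' 0 ⟨0,0,0,1⟩]

/-- The coordinates of an octonion with respect to the standard basis. -/
def coord (x : Octonion) : Fin 8 → ℝ :=
  ![(q1 x).re, (q1 x).imI, (q1 x).imJ, (q1 x).imK,
    (q2 x).re, (q2 x).imI, (q2 x).imJ, (q2 x).imK]

end Octonion

/-!
Put `c := f 1`. Since `y * 1 = y`, equivariance gives `f y = ȳ c`, and then, as conjugation is an
anti-involution, it becomes `(a b) c = b (a c)` for all octonions `a, b`. Write `c = (c₁, c₂)` in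
Cayley–Dickson form and let `x, y` be non-commuting quaternions. Taking `a = (x, 0)`, `b = (y, 0)`
gives `(x y - y x) c₁ = 0`; taking `a = (x, 0)` with `b = (0, 1)` or `b = (0, y)` gives
`(ȳ x̄ - x̄ ȳ) c̄₂ = 0`. As `ℍ` has no zero divisors, `c = 0`, hence `f = 0`.
-/

namespace Octonion

@[ext]
lemma ext {x y : Octonion} (h1 : q1 x = q1 y) (h2 : q2 x = q2 y) : x = y := Prod.ext h1 h2

@[simp] lemma q1_mk (a b : ℍ[ℝ]) : q1 (mk' a b) = a := rfl
@[simp] lemma q2_mk (a b : ℍ[ℝ]) : q2 (mk' a b) = b := rfl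
@[simp] lemma q1_zero : q1 0 = 0 := rfl
@[simp] lemma q2_zero : q2 0 = 0 := rfl
@[simp] lemma q1_one : q1 1 = 1 := rfl
@[simp] lemma q2_one : q2 1 = 0 := rfl
@[simp] lemma q1_conj (x : Octonion) : q1 (conj x) = star (q1 x) := rfl
@[simp] lemma q2_conj (x : Octonion) : q2 (conj x) = -q2 x := rfl
@[simp] lemma q1_mul (x y : Octonion) : q1 (x * y) = q1 x * q1 y - star (q2 y) * q2 x := rfl
@[simp] lemma q2_mul (x y : Octonion) : q2 (x * y) = q2 y * q1 x + q2 x * star (q1 y) := rfl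

protected lemma mul_one (x : Octonion) : x * 1 = x := by ext <;> simp

protected lemma mul_zero (x : Octonion) : x * 0 = 0 := by ext <;> simp

lemma conj_conj (x : Octonion) : conj (conj x) = x := by ext <;> simp

lemma conj_mul (x y : Octonion) : conj (x * y) = conj y * conj x := by
  ext <;> simp [sub_eq_add_neg, add_comm]

end Octonion

lemma Quaternion.exists_mul_ne_mul : ∃ x y : ℍ[ℝ], x * y ≠ y * x :=
  ⟨⟨0, 1, 0, 0⟩, ⟨0, 0, 1, 0⟩, fun h => by
    have := congrArg QuaternionAlgebra.imK h
    -- the literals have type `ℍ[ℝ,-1,0,-1]`, only semireducibly equal to `ℍ[ℝ]`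
    erw [Quaternion.imK_mul, Quaternion.imK_mul] at this
    norm_num at this⟩

namespace Octonion

section

variable {c : Octonion} (hc : ∀ a b : Octonion, a * b * c = b * (a * c))
include hc

lemma q1_eq_zero_of_forall_mul_mul_eq : q1 c = 0 := by
  obtain ⟨x, y, hxy⟩ := Quaternion.exists_mul_ne_mul
  have h : x * y * q1 c = y * (x * q1 c) := by simpa using congrArg q1 (hc (mk' x 0) (mk' y 0))
  have : (x * y - y * x) * q1 c = 0 := by rw [sub_mul, h, mul_assoc, sub_self]
  exact (mul_eq_zero.mp this).resolve_left (sub_ne_zero.mpr hxy)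

lemma q2_eq_zero_of_forall_mul_mul_eq : q2 c = 0 := by
  obtain ⟨x, y, hxy⟩ := Quaternion.exists_mul_ne_mul
  have hxy' : star y * star x ≠ star x * star y := by
    simpa only [star_mul] using star_injective.ne hxy
  set d := star (q2 c)
  have hd (z : ℍ[ℝ]) : d * z = star z * d := by
    simpa using congrArg q1 (hc (mk' z 0) (mk' 0 1))
  have hdyx : d * (y * x) = star x * d * y := by
    simpa using congrArg q1 (hc (mk' x 0) (mk' 0 y))
  have : (star y * star x - star x * star y) * d = 0 := by
    rw [sub_mul, sub_eq_zero]
    calc star y * star x * d = d * (y * x) := by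
          rw [mul_assoc, ← hd, ← mul_assoc, ← hd, mul_assoc]
      _ = star x * d * y := hdyx
      _ = star x * star y * d := by rw [mul_assoc, hd, mul_assoc]
  have hd0 : d = 0 := (mul_eq_zero.mp this).resolve_left (sub_ne_zero.mpr hxy')
  exact star_eq_zero.mp hd0

lemma eq_zero_of_forall_mul_mul_eq : c = 0 :=
  ext (q1_eq_zero_of_forall_mul_mul_eq hc) (q2_eq_zero_of_forall_mul_mul_eq hc)

end

end Octonion

open Octonion in
/-- An `ℝ`-linear map `f : 𝕆 → 𝕆` with `f (p x) = p̄ f(x)` for all `p, x` is zero. -/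
theorem octonion_conj_equivariant_map_eq_zero
    (f : Octonion →ₗ[ℝ] Octonion)
    (h : ∀ p x : Octonion, f (p * x) = conj p * f x) :
    f = 0 := by
  have hf (y : Octonion) : f y = conj y * f 1 := by simpa only [Octonion.mul_one] using h y 1
  have hc : f 1 = 0 := eq_zero_of_forall_mul_mul_eq fun a b => by
    have := h (conj b) (conj a)
    rwa [hf, hf (conj a), conj_mul, conj_conj, conj_conj] at this
  exact LinearMap.ext fun y => by rw [hf, hc, Octonion.mul_zero, LinearMap.zero_apply]
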